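/- Let (M,h,ξ,∇) be a Carroll spacetime and suppose ξ^n R^a_{bcn} = 0. Then for any covector field t with t(ξ)=1 and £_ξ t = 0, one has £_ξ(∇t) = 0, where ∇t is the (0,2)-tensor (∇t)_{ab} = ∇_a t_b. -/

import Mathlib

/-! Global-chart formulation; part of Proposition 8: if ξ^n R^a_{bcn} = 0,
then for any covector field t with t(ξ) = 1 and £_ξ t = 0 one has
£_ξ(∇t) = 0. -/

abbrev Vec4 : Type := Fin 4 → ℝ

noncomputable def pd (f : Vec4 → ℝ) (x : Vec4) (b : Fin 4) : ℝ :=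
  fderiv ℝ f x (Pi.single b 1)

/-- ∇_b v^a -/
noncomputable def covVec (Γ : Vec4 → Fin 4 → Fin 4 → Fin 4 → ℝ)
    (v : Vec4 → Vec4) (x : Vec4) (b a : Fin 4) : ℝ :=
  pd (fun y => v y a) x b + ∑ n, Γ x a b n * v x n

/-- ∇_b t_a (covector field) -/
noncomputable def covCov (Γ : Vec4 → Fin 4 → Fin 4 → Fin 4 → ℝ)
    (t : Vec4 → Vec4) (x : Vec4) (b a : Fin 4) : ℝ :=
  pd (fun y => t y a) x b - ∑ n, Γ x n b a * t x n

/-- ∇_c h_{ab} -/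
noncomputable def covH (Γ : Vec4 → Fin 4 → Fin 4 → Fin 4 → ℝ)
    (h : Vec4 → Fin 4 → Fin 4 → ℝ) (x : Vec4) (c a b : Fin 4) : ℝ :=
  pd (fun y => h y a b) x c - ∑ n, Γ x n c a * h x n b - ∑ n, Γ x n c b * h x a n

/-- R^a_{bcd} -/
noncomputable def riem (Γ : Vec4 → Fin 4 → Fin 4 → Fin 4 → ℝ)
    (x : Vec4) (a b c d : Fin 4) : ℝ :=
  pd (fun y => Γ y a c b) x d - pd (fun y => Γ y a d b) x c
  + ∑ n, (Γ x a d n * Γ x n c b - Γ x a c n * Γ x n d b)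


lemma pd_add {f g : Vec4 → ℝ} {x : Vec4} (hf : DifferentiableAt ℝ f x)
    (hg : DifferentiableAt ℝ g x) (b : Fin 4) :
    pd (fun y => f y + g y) x b = pd f x b + pd g x b := by
  simp [pd, fderiv_fun_add hf hg]

lemma pd_sub {f g : Vec4 → ℝ} {x : Vec4} (hf : DifferentiableAt ℝ f x)
    (hg : DifferentiableAt ℝ g x) (b : Fin 4) :
    pd (fun y => f y - g y) x b = pd f x b - pd g x b := by
  simp [pd, fderiv_fun_sub hf hg]

lemma pd_neg {f : Vec4 → ℝ} {x : Vec4} (b : Fin 4) :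
    pd (fun y => -f y) x b = -pd f x b := by
  simp [pd, fderiv_neg]

lemma pd_mul {f g : Vec4 → ℝ} {x : Vec4} (hf : DifferentiableAt ℝ f x)
    (hg : DifferentiableAt ℝ g x) (b : Fin 4) :
    pd (fun y => f y * g y) x b = pd f x b * g x + f x * pd g x b := by
  simp [pd, fderiv_fun_mul hf hg]; ring

lemma pd_sum {ι : Type*} (s : Finset ι) {f : ι → Vec4 → ℝ} {x : Vec4}
    (hf : ∀ i ∈ s, DifferentiableAt ℝ (f i) x) (b : Fin 4) :
    pd (fun y => ∑ i ∈ s, f i y) x b = ∑ i ∈ s, pd (f i) x b := by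
  simp [pd, fderiv_fun_sum hf]

lemma pd_zero_of {F : Vec4 → ℝ} (hF : ∀ y, F y = 0) (x : Vec4) (b : Fin 4) :
    pd F x b = 0 := by
  have : F = fun _ => 0 := funext hF
  simp [pd, this]

lemma contDiff_pd {f : Vec4 → ℝ} (hf : ContDiff ℝ (⊤ : ℕ∞) f) (b : Fin 4) :
    ContDiff ℝ (⊤ : ℕ∞) fun x => pd f x b := by
  have h1 : ContDiff ℝ (⊤ : ℕ∞) (fderiv ℝ f) := hf.fderiv_right (by simp)
  exact (ContinuousLinearMap.apply ℝ ℝ (Pi.single b 1)).contDiff.comp h1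

lemma pd_comm {f : Vec4 → ℝ} (hf : ContDiff ℝ (⊤ : ℕ∞) f) (x : Vec4) (b n : Fin 4) :
    pd (fun y => pd f y b) x n = pd (fun y => pd f y n) x b := by
  have hdiff : ∀ y, HasFDerivAt f (fderiv ℝ f y) y :=
    fun y => (hf.differentiable (by simp) y).hasFDerivAt
  have h1 : ContDiff ℝ (⊤ : ℕ∞) (fderiv ℝ f) := hf.fderiv_right (by simp)
  have h2 : HasFDerivAt (fderiv ℝ f) (fderiv ℝ (fderiv ℝ f) x) x :=
    (h1.differentiable (by simp) x).hasFDerivAt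
  have key : ∀ v w : Vec4, fderiv ℝ (fun y => fderiv ℝ f y v) x w
      = fderiv ℝ (fderiv ℝ f) x w v := by
    intro v w
    have h3 : HasFDerivAt (fun y => fderiv ℝ f y v)
        ((ContinuousLinearMap.apply ℝ ℝ v).comp (fderiv ℝ (fderiv ℝ f) x)) x :=
      (ContinuousLinearMap.apply ℝ ℝ v).hasFDerivAt.comp x h2
    rw [h3.fderiv]; rfl
  have hsymm := second_derivative_symmetric hdiff h2 (Pi.single b 1) (Pi.single n 1)
  simp only [pd, key]
  exact hsymm.symm

/-- If ξ^n R^a_{bcn} = 0 in a Carroll spacetime, then any covector field t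
with t(ξ) = 1 and £_ξ t = 0 satisfies £_ξ(∇t) = 0, where
(£_ξ S)_{ba} = ξ^n ∂_n S_{ba} + S_{na} ∂_b ξ^n + S_{bn} ∂_a ξ^n for
S_{ba} = ∇_b t_a. -/
theorem lie_deriv_of_nabla_t_vanishes
    (Γ : Vec4 → Fin 4 → Fin 4 → Fin 4 → ℝ)
    (hΓsm : ∀ a b c, ContDiff ℝ (⊤ : ℕ∞) fun x => Γ x a b c)
    (hΓsymm : ∀ x a b c, Γ x a b c = Γ x a c b)
    (ξ : Vec4 → Vec4) (hξsm : ∀ a, ContDiff ℝ (⊤ : ℕ∞) fun x => ξ x a)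
    (hξ0 : ∀ x, ξ x ≠ 0)
    (h : Vec4 → Fin 4 → Fin 4 → ℝ) (hhsm : ∀ a b, ContDiff ℝ (⊤ : ℕ∞) fun x => h x a b)
    (hhsymm : ∀ x a b, h x a b = h x b a)
    (horth : ∀ x a, ∑ b, h x a b * ξ x b = 0)
    (hcompatξ : ∀ x b a, covVec Γ ξ x b a = 0)
    (hcompath : ∀ x c a b, covH Γ h x c a b = 0)
    -- the curvature condition ξ^n R^a_{bcn} = 0:
    (hξR : ∀ x a b c, ∑ n, riem Γ x a b c n * ξ x n = 0)
    (t : Vec4 → Vec4) (htsm : ∀ a, ContDiff ℝ (⊤ : ℕ∞) fun x => t x a)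
    (htξ : ∀ x, ∑ a, t x a * ξ x a = 1)
    -- £_ξ t = 0:
    (hLt : ∀ x a,
      (∑ n, ξ x n * pd (fun y => t y a) x n)
      + (∑ n, t x n * pd (fun y => ξ y n) x a) = 0) :
    ∀ x b a,
      (∑ n, ξ x n * pd (fun y => covCov Γ t y b a) x n)
      + (∑ n, covCov Γ t x n a * pd (fun y => ξ y n) x b)
      + (∑ n, covCov Γ t x b n * pd (fun y => ξ y n) x a) = 0 := by
  -- differentiability helpers
  have hdξ : ∀ i (y : Vec4), DifferentiableAt ℝ (fun z => ξ z i) y :=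
    fun i y => ((hξsm i).differentiable (by simp)) y
  have hdt : ∀ i (y : Vec4), DifferentiableAt ℝ (fun z => t z i) y :=
    fun i y => ((htsm i).differentiable (by simp)) y
  have hdΓ : ∀ i j k (y : Vec4), DifferentiableAt ℝ (fun z => Γ z i j k) y :=
    fun i j k y => ((hΓsm i j k).differentiable (by simp)) y
  have hdpdt : ∀ i c (y : Vec4), DifferentiableAt ℝ (fun z => pd (fun w => t w i) z c) y :=
    fun i c y => ((contDiff_pd (htsm i) c).differentiable (by simp)) y
  have hdpdξ : ∀ i c (y : Vec4), DifferentiableAt ℝ (fun z => pd (fun w => ξ w i) z c) y :=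
    fun i c y => ((contDiff_pd (hξsm i) c).differentiable (by simp)) y
  -- (A): ∂_c ξ^i = -Γ^i_{cp} ξ^p
  have hA : ∀ x c i, pd (fun y => ξ y i) x c = -∑ p, Γ x i c p * ξ x p := by
    intro x c i
    have h0 := hcompatξ x c i
    unfold covVec at h0
    linarith
  have hApt : ∀ c i, (fun y => pd (fun z => ξ z i) y c)
      = (fun y => -∑ p, Γ y i c p * ξ y p) :=
    fun c i => funext fun y => hA y c i
  -- (DA): second derivatives of ξ
  have hDA : ∀ x c d i, pd (fun y => pd (fun z => ξ z i) y d) x c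
      = -∑ p, (pd (fun y => Γ y i d p) x c * ξ x p + Γ x i d p * pd (fun y => ξ y p) x c) := by
    intro x c d i
    rw [hApt d i]
    rw [pd_neg (f := fun y => ∑ p, Γ y i d p * ξ y p)]
    rw [pd_sum Finset.univ (fun p _ => (hdΓ i d p x).fun_mul (hdξ p x)) c]
    congr 1
    exact Finset.sum_congr rfl fun p _ => pd_mul (hdΓ i d p x) (hdξ p x) c
  -- (B): ξ^n ∂_n t_i = t_n Γ^n_{iq} ξ^q
  have hB : ∀ x i, ∑ n, ξ x n * pd (fun y => t y i) x n
      = ∑ n, t x n * ∑ q, Γ x n i q * ξ x q := by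
    intro x i
    have h0 := hLt x i
    simp only [hA, mul_neg] at h0
    rw [Finset.sum_neg_distrib] at h0
    linarith
  -- (DL): derivative of the Lie-derivative condition
  have hDL : ∀ x c i,
      (∑ n, (pd (fun y => ξ y n) x c * pd (fun y => t y i) x n
            + ξ x n * pd (fun y => pd (fun z => t z i) y n) x c))
      + (∑ n, (pd (fun y => t y n) x c * pd (fun y => ξ y n) x i
            + t x n * pd (fun y => pd (fun z => ξ z n) y i) x c)) = 0 := by
    intro x c i
    have h0 : pd (fun y => (∑ n, ξ y n * pd (fun z => t z i) y n)
          + (∑ n, t y n * pd (fun z => ξ z n) y i)) x c = 0 :=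
      pd_zero_of (fun y => hLt y i) x c
    rw [pd_add
        (DifferentiableAt.fun_sum (fun n _ => (hdξ n x).fun_mul (hdpdt i n x)))
        (DifferentiableAt.fun_sum (fun n _ => (hdt n x).fun_mul (hdpdξ n i x)))] at h0
    rw [pd_sum Finset.univ (fun n _ => (hdξ n x).fun_mul (hdpdt i n x)) c] at h0
    rw [pd_sum Finset.univ (fun n _ => (hdt n x).fun_mul (hdpdξ n i x)) c] at h0
    rw [Finset.sum_congr rfl (fun n _ => pd_mul (hdξ n x) (hdpdt i n x) c)] at h0
    rw [Finset.sum_congr rfl (fun n _ => pd_mul (hdt n x) (hdpdξ n i x) c)] at h0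
    exact h0
  intro x b a
  have hpdS : ∀ n, pd (fun y => covCov Γ t y b a) x n
      = pd (fun y => pd (fun z => t z a) y b) x n
        - ∑ m, (pd (fun y => Γ y m b a) x n * t x m + Γ x m b a * pd (fun y => t y m) x n) := by
    intro n
    rw [show (fun y => covCov Γ t y b a)
        = (fun y => pd (fun z => t z a) y b - ∑ m, Γ y m b a * t y m) from rfl]
    rw [pd_sub (hdpdt a b x)
        (DifferentiableAt.fun_sum (fun m _ => (hdΓ m b a x).fun_mul (hdt m x))) n]
    rw [pd_sum Finset.univ (fun m _ => (hdΓ m b a x).fun_mul (hdt m x)) n]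
    congr 1
    exact Finset.sum_congr rfl fun m _ => pd_mul (hdΓ m b a x) (hdt m x) n
  have hT1 : ∑ n, ξ x n * pd (fun y => covCov Γ t y b a) x n
      = (∑ n, ξ x n * pd (fun y => pd (fun z => t z a) y n) x b)
        - ∑ n, ∑ m, (ξ x n * (pd (fun y => Γ y m b a) x n * t x m)
                   + ξ x n * (Γ x m b a * pd (fun y => t y m) x n)) := by
    rw [← Finset.sum_sub_distrib]
    refine Finset.sum_congr rfl fun n _ => ?_
    rw [hpdS n, pd_comm (htsm a) x b n, mul_sub, Finset.mul_sum]
    congr 1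
    exact Finset.sum_congr rfl fun m _ => by ring
  have hDLba := hDL x b a
  rw [Finset.sum_add_distrib, Finset.sum_add_distrib] at hDLba
  have hT1' : ∑ n, ξ x n * pd (fun y => pd (fun z => t z a) y n) x b
      = -(∑ n, pd (fun y => ξ y n) x b * pd (fun y => t y a) x n)
        - (∑ n, pd (fun y => t y n) x b * pd (fun y => ξ y n) x a)
        - (∑ n, t x n * pd (fun y => pd (fun z => ξ z n) y a) x b) := by linarith
  rw [hT1, hT1']
  simp only [covCov]
  simp only [hDA]
  simp only [hA]
  have hPdGsym : ∀ m u v (d : Fin 4), pd (fun y => Γ y m u v) x d = pd (fun y => Γ y m v u) x d := by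
    intro m u v d
    rw [show (fun y => Γ y m u v) = (fun y => Γ y m v u) from funext fun y => hΓsymm y m u v]
  have SP : (∑ p, ∑ m, t x m * pd (fun y => Γ y m a p) x b * ξ x p)
      = (∑ p, ∑ m, t x m * pd (fun y => Γ y m p a) x b * ξ x p) :=
    Finset.sum_congr rfl fun p _ => Finset.sum_congr rfl fun m _ => by
      rw [hPdGsym m a p b]
  have SV1 : (∑ m, ∑ n, ∑ p, t x m * Γ x m a n * Γ x n b p * ξ x p)
      = (∑ m, ∑ n, ∑ p, t x m * Γ x m n a * Γ x n b p * ξ x p) :=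
    Finset.sum_congr rfl fun m _ => Finset.sum_congr rfl fun n _ =>
      Finset.sum_congr rfl fun p _ => by rw [hΓsymm x m a n]
  have SV2 : (∑ m, ∑ n, ∑ q, Γ x m b a * t x n * Γ x n m q * ξ x q)
      = (∑ m, ∑ n, ∑ q, Γ x m b a * t x n * Γ x n q m * ξ x q) :=
    Finset.sum_congr rfl fun m _ => Finset.sum_congr rfl fun n _ =>
      Finset.sum_congr rfl fun q _ => by rw [hΓsymm x n m q]
  have SV3 : (∑ m, ∑ q, ∑ n, t x m * Γ x m b q * Γ x q n a * ξ x n)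
      = (∑ m, ∑ q, ∑ n, t x m * Γ x m b q * Γ x q a n * ξ x n) :=
    Finset.sum_congr rfl fun m _ => Finset.sum_congr rfl fun q _ =>
      Finset.sum_congr rfl fun n _ => by rw [hΓsymm x q n a]
  have hB0 := hB x 0
  have hB1 := hB x 1
  have hB2 := hB x 2
  have hB3 := hB x 3
  have hR0 := hξR x 0 a b
  have hR1 := hξR x 1 a b
  have hR2 := hξR x 2 a b
  have hR3 := hξR x 3 a b
  simp only [riem] at hR0 hR1 hR2 hR3
  simp only [Fin.sum_univ_four] at SP SV1 SV2 SV3 hB0 hB1 hB2 hB3 hR0 hR1 hR2 hR3 ⊢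
  linear_combination (-(Γ x 0 b a))*hB0 + (-(Γ x 1 b a))*hB1 + (-(Γ x 2 b a))*hB2 + (-(Γ x 3 b a))*hB3
    + (-(t x 0))*hR0 + (-(t x 1))*hR1 + (-(t x 2))*hR2 + (-(t x 3))*hR3
    + SP - SV1 - SV2 - SV3
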